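/- arXiv:1011.2123 — 7 statements merged into one kernel-verified Lean document; each statement's English description precedes it below -/
import Mathlib

section
/- Let V be a finite-dimensional real vector space with basis e₁,…,eₙ, and let T : V → V be a continuous map such that (a) for each k = 1,…,n, the first k coordinates of T(v) depend only on the first k coordinates of v, and (b) for every nonzero linear form f on V and every sequence (vᵖ) with f(vᵖ) → +∞ one has f(T(vᵖ)) → +∞. Then T is surjective. -/
open Filter

/-- If `g` sends every sequence tending to `+∞` to a sequence tending to `+∞`,
then `g` itself tends to `+∞` at `+∞`. -/
lemma seq_tendsto_atTop (g : ℝ → ℝ)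
    (h : ∀ u : ℕ → ℝ, Tendsto u atTop atTop →
      Tendsto (fun p => g (u p)) atTop atTop) :
    Tendsto g atTop atTop := by
  by_contra hcon
  rw [tendsto_atTop_atTop] at hcon
  push_neg at hcon
  obtain ⟨b, hb⟩ := hcon
  choose u hu1 hu2 using hb
  have hseq : Tendsto (fun p : ℕ => u (p : ℝ)) atTop atTop := by
    exact tendsto_atTop_mono (fun p => hu1 (p : ℝ)) tendsto_natCast_atTop_atTop
  have := h _ hseq
  rw [tendsto_atTop_atTop] at this
  obtain ⟨N, hN⟩ := this b
  exact absurd (hN N le_rfl) (not_le.mpr (hu2 _))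

/-- A continuous "triangular" map `T : ℝⁿ → ℝⁿ` (the first `k`
coordinates of `T v` depend only on the first `k` coordinates of `v`) such that
`f (T vᵖ) → +∞` whenever `f` is a nonzero linear form and `f (vᵖ) → +∞`,
is surjective. -/
theorem yaoyao_triangular_surjective (n : ℕ) (T : (Fin n → ℝ) → (Fin n → ℝ))
    (hT : Continuous T)
    (ha : ∀ k : ℕ, ∀ v w : Fin n → ℝ, (∀ i : Fin n, (i : ℕ) < k → v i = w i) →
      ∀ i : Fin n, (i : ℕ) < k → T v i = T w i)
    (hb : ∀ f : (Fin n → ℝ) →ₗ[ℝ] ℝ, f ≠ 0 →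
      ∀ v : ℕ → Fin n → ℝ, Filter.Tendsto (fun p => f (v p)) Filter.atTop Filter.atTop →
        Filter.Tendsto (fun p => f (T (v p))) Filter.atTop Filter.atTop) :
    Function.Surjective T := by
  intro y
  -- main claim by induction on k
  have main : ∀ k : ℕ, k ≤ n → ∃ w : Fin n → ℝ, ∀ i : Fin n, (i : ℕ) < k → T w i = y i := by
    intro k
    induction k with
    | zero => exact fun _ => ⟨0, fun i hi => absurd hi (Nat.not_lt_zero _)⟩
    | succ k ih =>
      intro hk1
      have hk : k < n := hk1
      obtain ⟨w, hw⟩ := ih hk.le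
      set K : Fin n := ⟨k, hk⟩ with hK
      -- the one-variable function
      set g : ℝ → ℝ := fun t => T (Function.update w K t) K with hg
      have hgc : Continuous g := by
        apply (continuous_apply K).comp
        apply hT.comp
        exact (continuous_const.update K continuous_id)
      -- projection is nonzero
      have hproj : (LinearMap.proj K : (Fin n → ℝ) →ₗ[ℝ] ℝ) ≠ 0 := by
        intro h
        simpa using LinearMap.congr_fun h (Pi.single K 1)
      have hnproj : (-(LinearMap.proj K) : (Fin n → ℝ) →ₗ[ℝ] ℝ) ≠ 0 := by
        simpa using hproj
      have htop : Tendsto g atTop atTop := by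
        apply seq_tendsto_atTop
        intro u hu
        have := hb (LinearMap.proj K) hproj (fun p => Function.update w K (u p)) ?_
        · simpa [LinearMap.proj_apply] using this
        · simpa [LinearMap.proj_apply] using hu
      have hbot : Tendsto g atBot atBot := by
        have : Tendsto (fun t => -(g (-t))) atTop atTop := by
          apply seq_tendsto_atTop
          intro u hu
          have := hb (-(LinearMap.proj K)) hnproj (fun p => Function.update w K (-(u p))) ?_
          · simpa [LinearMap.proj_apply] using this
          · simpa [LinearMap.proj_apply] using hu
        have h2 : Tendsto (fun t => g (-t)) atTop atBot := tendsto_neg_atTop_iff.mp this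
        have h3 := h2.comp tendsto_neg_atBot_atTop
        have he : ((fun t => g (-t)) ∘ Neg.neg) = g := by funext t; simp
        rwa [he] at h3
      have hsurj : Function.Surjective g := hgc.surjective htop hbot
      obtain ⟨t, ht⟩ := hsurj (y K)
      refine ⟨Function.update w K t, fun i hi => ?_⟩
      rcases Nat.lt_succ_iff_lt_or_eq.mp hi with h | h
      · have heq : T (Function.update w K t) i = T w i := by
          apply ha k _ _ (fun j hj => ?_) i h
          exact Function.update_of_ne (by simp [hK, Fin.ext_iff]; omega) _ _
        rw [heq]; exact hw i h
      · have : i = K := Fin.ext h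
        rw [this]; exact ht
  obtain ⟨w, hw⟩ := main n le_rfl
  exact ⟨w, funext fun i => hw i i.isLt⟩
end

section
/- Let F = {x ∈ ℝⁿ : x₁ = α} and let ℓ be an affine form on ℝⁿ that is non-constant on F. Set A = F ∩ {ℓ ≥ 0}, and for a vector v with v₁ = 1 define A_v = {x ∈ ℝⁿ : x₁ ≥ α and x − (x₁ − α)v ∈ A}. If v, w satisfy v₁ = w₁ = 1 and the linear part of ℓ satisfies ℓ⃗(v) > ℓ⃗(w), then A_v is strictly contained in A_w. -/
/-!
Along a direction `v` with `π v = 1`, a point `x` with `π x ≥ α` is swept from its base point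
`x - (π x - α) • v` on the hyperplane `π = α`, where `ℓ` takes the value `ℓ x - (π x - α) ℓ⃗ v`.
So `x ∈ A_v` iff `(π x - α) ℓ⃗ v ≤ ℓ x`, which is monotone in `ℓ⃗ v`. For strictness, `ℓ` vanishes at
some `p` on the hyperplane (it is non-constant there), and `p + w` lies in `A_w` but not in `A_v`.
-/

variable {E : Type*} [AddCommGroup E] [Module ℝ E]

/-- The paper's `A_v`, with `π` in place of the first coordinate. -/
def raySweep (π : E →ₗ[ℝ] ℝ) (α : ℝ) (A : Set E) (v : E) : Set E :=
  {x | α ≤ π x ∧ x - (π x - α) • v ∈ A}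

/-- The paper's `A = F ∩ {ℓ ≥ 0}`. -/
def halfSlice (π : E →ₗ[ℝ] ℝ) (α : ℝ) (ℓ : E →ᵃ[ℝ] ℝ) : Set E :=
  {x | π x = α} ∩ {x | 0 ≤ ℓ x}

theorem AffineMap.exists_lineMap_eq_of_ne {ℓ : E →ᵃ[ℝ] ℝ} {y z : E} (h : ℓ y ≠ ℓ z) (c : ℝ) :
    ∃ t : ℝ, ℓ (AffineMap.lineMap y z t) = c := by
  refine ⟨(c - ℓ y) / (ℓ z - ℓ y), ?_⟩
  have : ℓ z - ℓ y ≠ 0 := sub_ne_zero.mpr h.symm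
  rw [AffineMap.apply_lineMap, AffineMap.lineMap_apply_ring', div_mul_cancel₀ _ this]
  ring

theorem exists_mem_levelSet_apply_eq_zero {π : E →ₗ[ℝ] ℝ} {α : ℝ} {ℓ : E →ᵃ[ℝ] ℝ} {y z : E}
    (hy : π y = α) (hz : π z = α) (h : ℓ y ≠ ℓ z) : ∃ p, π p = α ∧ ℓ p = 0 := by
  obtain ⟨t, ht⟩ := AffineMap.exists_lineMap_eq_of_ne h 0
  refine ⟨AffineMap.lineMap y z t, ?_, ht⟩
  rw [← π.coe_toAffineMap, AffineMap.apply_lineMap, π.coe_toAffineMap, hy, hz,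
    AffineMap.lineMap_same_apply]

section raySweep

variable {π : E →ₗ[ℝ] ℝ} {α : ℝ} {ℓ : E →ᵃ[ℝ] ℝ} {v w : E}

theorem mem_raySweep_halfSlice_iff (hv : π v = 1) {x : E} :
    x ∈ raySweep π α (halfSlice π α ℓ) v ↔ α ≤ π x ∧ (π x - α) * ℓ.linear v ≤ ℓ x := by
  have hℓ : ℓ (x - (π x - α) • v) = ℓ x - (π x - α) * ℓ.linear v := by
    have := ℓ.linearMap_vsub x (x - (π x - α) • v)
    simp only [vsub_eq_sub, sub_sub_cancel, map_smul, smul_eq_mul] at this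
    linarith
  simp only [raySweep, halfSlice, Set.mem_ofPred_eq, Set.mem_inter_iff, hℓ, map_sub, map_smul,
    smul_eq_mul, hv, mul_one, sub_sub_cancel, sub_nonneg, true_and]

theorem raySweep_halfSlice_mono (hv : π v = 1) (hw : π w = 1) (h : ℓ.linear w ≤ ℓ.linear v) :
    raySweep π α (halfSlice π α ℓ) v ⊆ raySweep π α (halfSlice π α ℓ) w := by
  intro x hx
  rw [mem_raySweep_halfSlice_iff hv] at hx
  rw [mem_raySweep_halfSlice_iff hw]
  exact ⟨hx.1, (mul_le_mul_of_nonneg_left h (sub_nonneg.mpr hx.1)).trans hx.2⟩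

theorem add_mem_raySweep_halfSlice_iff {p u : E} (hu : π u = 1) (hw : π w = 1) (hp : π p = α)
    (hℓp : ℓ p = 0) :
    p + w ∈ raySweep π α (halfSlice π α ℓ) u ↔ ℓ.linear u ≤ ℓ.linear w := by
  have hℓ : ℓ (p + w) = ℓ.linear w := by
    have := ℓ.linearMap_vsub (p + w) p
    rw [vsub_eq_sub, add_sub_cancel_left, vsub_eq_sub, hℓp, sub_zero] at this
    exact this.symm
  rw [mem_raySweep_halfSlice_iff hu, map_add, hp, hw, hℓ, add_sub_cancel_left, one_mul]
  exact and_iff_right (by linarith)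

theorem raySweep_halfSlice_ssubset (hv : π v = 1) (hw : π w = 1) (hℓ : ∃ p, π p = α ∧ ℓ p = 0)
    (h : ℓ.linear w < ℓ.linear v) :
    raySweep π α (halfSlice π α ℓ) v ⊂ raySweep π α (halfSlice π α ℓ) w := by
  obtain ⟨p, hp, hℓp⟩ := hℓ
  refine (raySweep_halfSlice_mono hv hw h.le).ssubset_of_mem_notMem
    ((add_mem_raySweep_halfSlice_iff hw hw hp hℓp).mpr le_rfl) ?_
  rw [add_mem_raySweep_halfSlice_iff hv hw hp hℓp]
  exact h.not_ge

end raySweep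

/-- (Lemma 4 (ii)) With `F = {x : x₁ = α}`, `ℓ` an affine form non-constant
on `F`, `A = F ∩ {ℓ ≥ 0}` and `A_v = {x : x₁ ≥ α and x - (x₁ - α)v ∈ A}`, if
`v₁ = w₁ = 1` and `ℓ⃗(v) > ℓ⃗(w)` then `A_v ⊊ A_w`. -/
theorem prism_strict_inclusion (n : ℕ) (hn : 0 < n) (α : ℝ)
    (ℓ : (Fin n → ℝ) →ᵃ[ℝ] ℝ)
    (F : Set (Fin n → ℝ)) (hF : F = {x | x ⟨0, hn⟩ = α})
    (hnc : ∃ y ∈ F, ∃ z ∈ F, ℓ y ≠ ℓ z)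
    (A : Set (Fin n → ℝ)) (hA : A = F ∩ {x | 0 ≤ ℓ x})
    (v w : Fin n → ℝ) (hv : v ⟨0, hn⟩ = 1) (hw : w ⟨0, hn⟩ = 1)
    (hvw : ℓ.linear w < ℓ.linear v) :
    {x | α ≤ x ⟨0, hn⟩ ∧ x - (x ⟨0, hn⟩ - α) • v ∈ A} ⊂
      {x | α ≤ x ⟨0, hn⟩ ∧ x - (x ⟨0, hn⟩ - α) • w ∈ A} := by
  subst hF hA
  obtain ⟨y, hy, z, hz, hyz⟩ := hnc
  let π : (Fin n → ℝ) →ₗ[ℝ] ℝ := LinearMap.proj ⟨0, hn⟩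
  exact raySweep_halfSlice_ssubset (π := π) hv hw
    (exists_mem_levelSet_apply_eq_zero (π := π) (α := α) hy hz hyz) hvw
end

section
/- Let x, y ∈ ℝⁿ and let v¹,…,vⁿ and w¹,…,wⁿ be two sub-diagonal sequences of vectors in ℝⁿ, meaning vⁱ_j = 0 for j < i and vⁱ_i = 1 (and likewise for wⁱ). If x + pos(v¹,…,vⁿ) = y + pos(w¹,…,wⁿ), then x = y and vⁱ = wⁱ for all i = 1,…,n. -/
open Finset

/-- Coordinate evaluation: if `c i = 0` for all `i < j`, then the `j`-th coordinate
of `∑ i, c i • u i` is `c j`, for a sub-diagonal family `u`. -/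
lemma subdiag_coord {n : ℕ} (u : Fin n → Fin n → ℝ) (c : Fin n → ℝ)
    (h0 : ∀ i j : Fin n, j < i → u i j = 0) (h1 : ∀ i : Fin n, u i i = 1)
    (j : Fin n) (hc : ∀ i, i < j → c i = 0) :
    (∑ i, c i • u i) j = c j := by
  rw [Finset.sum_apply]
  rw [Finset.sum_eq_single j]
  · simp [h1 j]
  · intro i _ hij
    rcases lt_or_gt_of_ne hij with hlt | hgt
    · simp [hc i hlt]
    · simp [h0 i j hgt]
  · simp

/-- Key: a vanishing nonnegative combination of two sub-diagonal families has all
coefficients zero. -/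
lemma subdiag_combo_zero {n : ℕ} (v w : Fin n → Fin n → ℝ)
    (hv0 : ∀ i j : Fin n, j < i → v i j = 0) (hv1 : ∀ i : Fin n, v i i = 1)
    (hw0 : ∀ i j : Fin n, j < i → w i j = 0) (hw1 : ∀ i : Fin n, w i i = 1)
    (t s : Fin n → ℝ) (ht : ∀ i, 0 ≤ t i) (hs : ∀ i, 0 ≤ s i)
    (h : ∑ i, t i • v i + ∑ i, s i • w i = 0) :
    ∀ j, t j = 0 ∧ s j = 0 := by
  have key : ∀ m : ℕ, ∀ j : Fin n, (j : ℕ) = m → t j = 0 ∧ s j = 0 := by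
    intro m
    induction m using Nat.strong_induction_on with
    | _ m ihm =>
    intro j hj
    have ih : ∀ i : Fin n, i < j → t i = 0 ∧ s i = 0 := fun i hi =>
      ihm (i : ℕ) (hj ▸ hi) i rfl
    have hcv : (∑ i, t i • v i) j = t j :=
      subdiag_coord v t hv0 hv1 j (fun i hi => (ih i hi).1)
    have hcw : (∑ i, s i • w i) j = s j :=
      subdiag_coord w s hw0 hw1 j (fun i hi => (ih i hi).2)
    have hj : t j + s j = 0 := by
      have := congrFun h j
      simpa [hcv, hcw] using this
    constructor
    · linarith [ht j, hs j]
    · linarith [ht j, hs j]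
  exact fun j => key j j rfl

/-- If a vector `u` vanishing below `i` with `u i = 1` is a nonnegative combination
of a sub-diagonal family `w`, then `u - w i` is again such a combination. -/
lemma subdiag_rep_diff {n : ℕ} (w : Fin n → Fin n → ℝ)
    (hw0 : ∀ i j : Fin n, j < i → w i j = 0) (hw1 : ∀ i : Fin n, w i i = 1)
    (u : Fin n → ℝ) (i : Fin n) (hu0 : ∀ j, j < i → u j = 0) (hu1 : u i = 1)
    (t : Fin n → ℝ) (ht : ∀ k, 0 ≤ t k) (hrep : u = ∑ k, t k • w k) :
    ∃ t' : Fin n → ℝ, (∀ k, 0 ≤ t' k) ∧ u - w i = ∑ k, t' k • w k := by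
  -- First: t k = 0 for k < i
  have hzero : ∀ k, k < i → t k = 0 := by
    have key : ∀ m : ℕ, ∀ k : Fin n, (k : ℕ) = m → k < i → t k = 0 := by
      intro m
      induction m using Nat.strong_induction_on with
      | _ m ihm =>
      intro k hk hki
      have ih : ∀ j : Fin n, j < k → j < i → t j = 0 := fun j hj hji =>
        ihm (j : ℕ) (hk ▸ hj) j rfl hji
      have h1 : (∑ m, t m • w m) k = t k :=
        subdiag_coord w t hw0 hw1 k (fun j hj => ih j hj (hj.trans hki))
      have h2 : u k = 0 := hu0 k hki
      rw [hrep] at h2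
      rw [h1] at h2
      exact h2
    exact fun k => key k k rfl
  have hti : t i = 1 := by
    have h1 : (∑ m, t m • w m) i = t i :=
      subdiag_coord w t hw0 hw1 i hzero
    rw [hrep] at hu1; rw [h1] at hu1; exact hu1
  refine ⟨Function.update t i 0, ?_, ?_⟩
  · intro k
    rcases eq_or_ne k i with rfl | hk
    · simp
    · simp [Function.update_of_ne hk, ht k]
  · have hsplit : ∑ k, t k • w k = t i • w i + ∑ k ∈ univ.erase i, t k • w k :=
      (Finset.add_sum_erase _ _ (mem_univ i)).symm
    have hsplit' : ∑ k, (Function.update t i 0) k • w k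
        = (0 : ℝ) • w i + ∑ k ∈ univ.erase i, t k • w k := by
      rw [← Finset.add_sum_erase _ (fun k => (Function.update t i 0) k • w k) (mem_univ i)]
      congr 1
      · simp
      · exact Finset.sum_congr rfl fun k hk => by
          rw [Function.update_of_ne (Finset.ne_of_mem_erase hk)]
    rw [hsplit', hrep, hsplit, hti]
    simp only [one_smul, zero_smul, zero_add]
    abel

/-- Two representations of the same translated positive hull by
sub-diagonal sequences of vectors coincide: if `x + pos(v¹,…,vⁿ) = y + pos(w¹,…,wⁿ)`
with `vⁱ_j = 0` for `j < i`, `vⁱ_i = 1` (and likewise for `w`), then `x = y` and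
`vⁱ = wⁱ` for all `i`. -/
theorem subdiagonal_pos_hull_unique (n : ℕ) (x y : Fin n → ℝ)
    (v w : Fin n → (Fin n → ℝ))
    (hv0 : ∀ i j : Fin n, j < i → v i j = 0) (hv1 : ∀ i : Fin n, v i i = 1)
    (hw0 : ∀ i j : Fin n, j < i → w i j = 0) (hw1 : ∀ i : Fin n, w i i = 1)
    (h : {z | ∃ t : Fin n → ℝ, (∀ i, 0 ≤ t i) ∧ z = x + ∑ i, t i • v i} =
         {z | ∃ t : Fin n → ℝ, (∀ i, 0 ≤ t i) ∧ z = y + ∑ i, t i • w i}) :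
    x = y ∧ v = w := by
  -- x lies in the right-hand set
  have hxmem : x ∈ {z | ∃ t : Fin n → ℝ, (∀ i, 0 ≤ t i) ∧ z = y + ∑ i, t i • w i} := by
    rw [← h]; exact ⟨0, fun i => le_refl 0, by simp⟩
  have hymem : y ∈ {z | ∃ t : Fin n → ℝ, (∀ i, 0 ≤ t i) ∧ z = x + ∑ i, t i • v i} := by
    rw [h]; exact ⟨0, fun i => le_refl 0, by simp⟩
  obtain ⟨t, ht, hxt⟩ := hxmem
  obtain ⟨s, hs, hys⟩ := hymem
  have hsum0 : ∑ i, s i • v i + ∑ i, t i • w i = 0 := by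
    have : x = (x + ∑ i, s i • v i) + ∑ i, t i • w i := by
      rw [← hys]; exact hxt
    have := this
    abel_nf at this ⊢
    linear_combination (norm := abel_nf) this.symm
  have hts := subdiag_combo_zero v w hv0 hv1 hw0 hw1 s t hs ht hsum0
  have hxy : x = y := by
    have ht0 : t = 0 := funext fun j => (hts j).2
    rw [hxt, ht0]; simp
  refine ⟨hxy, ?_⟩
  funext i
  -- v i as a nonnegative combination of w
  have hvmem : x + v i ∈ {z | ∃ t : Fin n → ℝ, (∀ i, 0 ≤ t i) ∧ z = y + ∑ i, t i • w i} := by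
    rw [← h]
    refine ⟨Pi.single i 1, fun k => by
      rcases eq_or_ne k i with rfl | hk
      · simp
      · simp [Pi.single_eq_of_ne hk], ?_⟩
    congr 1
    rw [Finset.sum_eq_single i]
    · simp
    · intro k _ hk; simp [Pi.single_eq_of_ne hk]
    · simp
  have hwmem : y + w i ∈ {z | ∃ t : Fin n → ℝ, (∀ i, 0 ≤ t i) ∧ z = x + ∑ i, t i • v i} := by
    rw [h]
    refine ⟨Pi.single i 1, fun k => by
      rcases eq_or_ne k i with rfl | hk
      · simp
      · simp [Pi.single_eq_of_ne hk], ?_⟩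
    congr 1
    rw [Finset.sum_eq_single i]
    · simp
    · intro k _ hk; simp [Pi.single_eq_of_ne hk]
    · simp
  obtain ⟨a, ha, hva⟩ := hvmem
  obtain ⟨b, hb, hwb⟩ := hwmem
  have hvrep : v i = ∑ k, a k • w k := by
    have : x + v i = x + ∑ k, a k • w k := by rw [hva, hxy]
    exact add_left_cancel this
  have hwrep : w i = ∑ k, b k • v k := by
    have : y + w i = y + ∑ k, b k • v k := by rw [hwb, hxy]
    exact add_left_cancel this
  obtain ⟨a', ha', hda⟩ := subdiag_rep_diff w hw0 hw1 (v i) i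
    (fun j hj => hv0 i j hj) (hv1 i) a ha hvrep
  obtain ⟨b', hb', hdb⟩ := subdiag_rep_diff v hv0 hv1 (w i) i
    (fun j hj => hw0 i j hj) (hw1 i) b hb hwrep
  have hzero : ∑ k, b' k • v k + ∑ k, a' k • w k = 0 := by
    rw [← hda, ← hdb]; abel
  have := subdiag_combo_zero v w hv0 hv1 hw0 hw1 b' a' hb' ha' hzero
  have ha'0 : a' = 0 := funext fun j => (this j).2
  have : v i - w i = 0 := by rw [hda, ha'0]; simp
  exact sub_eq_zero.mp this
end

section
/- Define Yao-Yao partitions inductively: a Yao-Yao partition of a 0-dimensional affine space {x} is {{x}} with center x; a Yao-Yao partition of an n-dimensional real affine space E (n ≥ 1) is given by a hyperplane F, a vector v ∉ F⃗, and two Yao-Yao partitions P₁, P₋₁ of F with the same center x, via P = {A + ℝ₋v : A ∈ P₋₁} ∪ {A + ℝ₊v : A ∈ P₁}, with center x. Then every closed affine half-space containing the center x of a Yao-Yao partition P contains some element of P. -/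
/-- Yao-Yao partitions (Definition 1), inductively: `IsYaoYao n E P x` means `P` is a
Yao-Yao partition with center `x` of the `n`-dimensional affine subspace of `V` whose
carrier set is `E`.  In dimension `0`, `E` is a point `{x}` and `P = {{x}}`; in dimension
`n+1`, `P` is built from a hyperplane `F` of `E` (an `n`-dimensional carrier), a vector
`v` outside the direction of `F`, and two Yao-Yao partitions `P₁, P₋₁` of `F` with the
same center `x`, as `{A + ℝ₋v : A ∈ P₋₁} ∪ {A + ℝ₊v : A ∈ P₁}`. -/
inductive IsYaoYao {V : Type*} [AddCommGroup V] [Module ℝ V] :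
    ℕ → Set V → Set (Set V) → V → Prop
  | zero (x : V) : IsYaoYao 0 {x} {{x}} x
  | succ {n : ℕ} {F : Set V} (v : V) {P₁ Pm : Set (Set V)} {x : V}
      (hv : v ∉ vectorSpan ℝ F)
      (h1 : IsYaoYao n F P₁ x) (hm : IsYaoYao n F Pm x) :
      IsYaoYao (n + 1) {y | ∃ a ∈ F, ∃ t : ℝ, y = a + t • v}
        ({B | ∃ A ∈ Pm, B = {y | ∃ a ∈ A, ∃ t : ℝ, t ≤ 0 ∧ y = a + t • v}} ∪
         {B | ∃ A ∈ P₁, B = {y | ∃ a ∈ A, ∃ t : ℝ, 0 ≤ t ∧ y = a + t • v}}) x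


theorem yaoyao_aux {V : Type*} [AddCommGroup V] [Module ℝ V]
    {n : ℕ} {E : Set V} {P : Set (Set V)} {x : V}
    (hP : IsYaoYao n E P x) (ℓ : V →ᵃ[ℝ] ℝ) (hx : 0 ≤ ℓ x) :
    ∃ A ∈ P, A ⊆ {y | 0 ≤ ℓ y} := by
  induction hP with
  | zero x =>
    exact ⟨{x}, rfl, by rintro y rfl; exact hx⟩
  | succ v hv h1 hm ih1 ihm =>
    have key : ∀ (a : V) (t : ℝ), ℓ (a + t • v) = ℓ a + t * ℓ.linear v := by
      intro a t
      have : a + t • v = t • v +ᵥ a := add_comm _ _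
      rw [this, AffineMap.map_vadd, map_smul]
      simp [vadd_eq_add, smul_eq_mul, add_comm]
    rcases le_or_gt 0 (ℓ.linear v) with hc | hc
    · obtain ⟨A, hA, hAl⟩ := ih1 hx
      refine ⟨_, Or.inr ⟨A, hA, rfl⟩, ?_⟩
      rintro y ⟨a, ha, t, ht, rfl⟩
      have h := hAl ha
      simp only [Set.mem_setOf_eq] at h ⊢
      rw [key]
      positivity
    · obtain ⟨A, hA, hAl⟩ := ihm hx
      refine ⟨_, Or.inl ⟨A, hA, rfl⟩, ?_⟩
      rintro y ⟨a, ha, t, ht, rfl⟩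
      have h := hAl ha
      simp only [Set.mem_setOf_eq] at h ⊢
      rw [key]
      nlinarith [h]

/-- (Proposition 1) Every closed affine half-space containing the center
of a Yao-Yao partition of `ℝⁿ` contains an element of the partition. -/
theorem yaoyao_halfspace (n : ℕ) (P : Set (Set (Fin n → ℝ))) (x : Fin n → ℝ)
    (hP : IsYaoYao n Set.univ P x)
    (ℓ : (Fin n → ℝ) →ᵃ[ℝ] ℝ) (hl : ℓ ≠ 0) (hx : 0 ≤ ℓ x) :
    ∃ A ∈ P, A ⊆ {y | 0 ≤ ℓ y} := yaoyao_aux hP ℓ hx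
end

section
/- Let μ be a finite nonnegative Borel measure on an n-dimensional real affine space E vanishing on affine hyperplanes, and let P be a Yao-Yao equipartition for μ, i.e. a Yao-Yao partition with μ(A) = 2^{−n} μ(E) for all A ∈ P, with center x. If K is a convex subset of E with μ(E ∖ K) < 2^{−n} μ(E), then x ∈ K. -/
open MeasureTheory
open scoped ENNReal

/-- Every closed half-space containing the center of a Yao-Yao partition contains
a member of the partition. -/
lemma IsYaoYao.exists_subset_halfspace {V : Type*} [AddCommGroup V] [Module ℝ V]
    {n : ℕ} {E : Set V} {P : Set (Set V)} {x : V}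
    (h : IsYaoYao n E P x) (f : V →ᵃ[ℝ] ℝ) (c : ℝ) (hx : f x ≤ c) :
    ∃ A ∈ P, A ⊆ {y | f y ≤ c} := by
  revert hx
  induction h with
  | zero x => exact fun hx => ⟨{x}, rfl, by rintro y rfl; exact hx⟩
  | succ v hv h1 hm ih1 ihm =>
    intro hx
    have key : ∀ (a : V) (t : ℝ), f (a + t • v) = t * f.linear v + f a := by
      intro a t
      have := f.map_vadd a (t • v)
      simpa [add_comm] using this
    rcases le_or_gt (f.linear v) 0 with hfv | hfv
    · obtain ⟨A, hA, hAsub⟩ := ih1 hx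
      refine ⟨_, Or.inr ⟨A, hA, rfl⟩, ?_⟩
      rintro y ⟨a, ha, t, ht, rfl⟩
      have h1 : t * f.linear v ≤ 0 := mul_nonpos_of_nonneg_of_nonpos ht hfv
      have h2 : f a ≤ c := hAsub ha
      simp only [Set.mem_setOf_eq, key]
      linarith
    · obtain ⟨A, hA, hAsub⟩ := ihm hx
      refine ⟨_, Or.inl ⟨A, hA, rfl⟩, ?_⟩
      rintro y ⟨a, ha, t, ht, rfl⟩
      have h1 : t * f.linear v ≤ 0 := mul_nonpos_of_nonpos_of_nonneg ht hfv.le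
      have h2 : f a ≤ c := hAsub ha
      simp only [Set.mem_setOf_eq, key]
      linarith

/-- (Proposition 2) If `P` is a Yao-Yao equipartition with center `x` for
a finite Borel measure `μ` on `ℝⁿ` vanishing on affine hyperplanes, and `K` is a convex
set with `μ(ℝⁿ ∖ K) < 2⁻ⁿ μ(ℝⁿ)`, then `x ∈ K`. -/
theorem yaoyao_center_mem_convex (n : ℕ)
    (μ : Measure (Fin n → ℝ)) [IsFiniteMeasure μ]
    (hμ : ∀ f : (Fin n → ℝ) →ᵃ[ℝ] ℝ, f.linear ≠ 0 → μ {x | f x = 0} = 0)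
    (P : Set (Set (Fin n → ℝ))) (x : Fin n → ℝ)
    (hP : IsYaoYao n Set.univ P x)
    (hequi : ∀ A ∈ P, μ A = μ Set.univ / 2 ^ n)
    (K : Set (Fin n → ℝ)) (hK : Convex ℝ K)
    (hKμ : μ Kᶜ < μ Set.univ / 2 ^ n) :
    x ∈ K := by
  by_contra hx
  have hle : μ Set.univ / 2 ^ n ≤ μ Set.univ := by
    have h1 : (1 : ℝ≥0∞) ≤ 2 ^ n := one_le_pow_of_one_le' one_le_two n
    calc μ Set.univ / 2 ^ n ≤ μ Set.univ / 1 := by gcongr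
      _ = μ Set.univ := by simp
  -- a convex set of measure zero yields a contradiction
  have hnull : ¬ (μ K = 0) := by
    intro h0
    have : μ Set.univ ≤ μ K + μ Kᶜ := by
      conv_lhs => rw [← Set.union_compl_self K]
      exact measure_union_le _ _
    rw [h0, zero_add] at this
    exact absurd ((this.trans_lt hKμ).trans_le hle) (lt_irrefl _)
  rcases Set.eq_empty_or_nonempty K with rfl | ⟨p, hp⟩
  · exact hnull (measure_empty)
  rcases Set.eq_empty_or_nonempty (interior K) with hint | ⟨z, hz⟩
  · -- interior empty: K lies in an affine hyperplane, hence is null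
    have hspan : affineSpan ℝ K ≠ ⊤ := by
      intro h
      rw [← hK.interior_nonempty_iff_affineSpan_eq_top] at h
      rw [hint] at h
      exact Set.not_nonempty_empty h
    have hdir : (affineSpan ℝ K).direction < ⊤ := by
      rw [lt_top_iff_ne_top]
      intro h
      exact hspan ((AffineSubspace.direction_eq_top_iff_of_nonempty
        ⟨p, subset_affineSpan ℝ K hp⟩).mp h)
    obtain ⟨f, hf0, hfker⟩ := Submodule.exists_dual_map_eq_bot_of_lt_top hdir inferInstance
    set g : (Fin n → ℝ) →ᵃ[ℝ] ℝ :=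
      ⟨fun y => f (y - p), f, fun pt v => by simp [vadd_eq_add]; ring⟩ with hg
    have hKsub : K ⊆ {y | g y = 0} := by
      intro y hy
      have hmem : y - p ∈ (affineSpan ℝ K).direction := by
        have := AffineSubspace.vsub_mem_direction (subset_affineSpan ℝ K hy)
          (subset_affineSpan ℝ K hp)
        simpa using this
      have : f (y - p) ∈ Submodule.map f (affineSpan ℝ K).direction :=
        Submodule.mem_map_of_mem hmem
      rw [hfker] at this
      show f (y - p) = 0
      rw [map_sub]
      simpa using this
    exact hnull (measure_mono_null hKsub (hμ g hf0))
  · -- interior nonempty: separate x from K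
    have hxint : x ∉ interior K := fun h => hx (interior_subset h)
    obtain ⟨f, hf⟩ := geometric_hahn_banach_open_point (hK.interior) isOpen_interior hxint
    -- f ≤ f x on all of K, by a limit argument
    have hKle : ∀ y ∈ K, f y ≤ f x := by
      intro y hy
      have hev : ∀ t ∈ Set.Ioo (0:ℝ) 1, f ((1 - t) • y + t • z) ≤ f x := fun t ht =>
        (hf _ (hK.combo_closure_interior_mem_interior (subset_closure hy) hz
          (by linarith [ht.2]) ht.1 (by ring))).le
      have hcont : Filter.Tendsto (fun t : ℝ => f ((1 - t) • y + t • z))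
          (nhdsWithin 0 (Set.Ioi 0)) (nhds (f y)) := by
        have h0 : Filter.Tendsto (fun t : ℝ => f ((1 - t) • y + t • z)) (nhds 0)
            (nhds (f ((1 - (0:ℝ)) • y + (0:ℝ) • z))) := by
          apply Continuous.tendsto
          fun_prop
        simpa using h0.mono_left nhdsWithin_le_nhds
      exact le_of_tendsto hcont (Filter.eventually_iff_exists_mem.mpr
        ⟨Set.Ioo 0 1, Ioo_mem_nhdsGT_of_mem ⟨le_refl 0, zero_lt_one⟩, hev⟩)
    -- the affine map y ↦ f x - f y
    set g : (Fin n → ℝ) →ᵃ[ℝ] ℝ :=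
      ⟨fun y => f x - f y, -f.toLinearMap, fun pt v => by simp [vadd_eq_add]; ring⟩ with hg
    have hg0 : g.linear ≠ 0 := by
      intro h
      have h2 : (-f.toLinearMap : (Fin n → ℝ) →ₗ[ℝ] ℝ) (z - x) = 0 := by
        have heq : (-f.toLinearMap : (Fin n → ℝ) →ₗ[ℝ] ℝ) = 0 := h
        rw [heq]; rfl
      simp [sub_eq_zero] at h2
      exact absurd h2.symm (ne_of_lt (hf z hz))
    obtain ⟨A, hA, hAsub⟩ := hP.exists_subset_halfspace g 0 (by simp [hg])
    -- A ⊆ Kᶜ ∪ {g = 0}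
    have hAsub' : A ⊆ Kᶜ ∪ {y | g y = 0} := by
      intro y hy
      by_cases hyK : y ∈ K
      · right
        have h1 : f x - f y ≤ 0 := hAsub hy
        have h2 : f y ≤ f x := hKle y hyK
        show f x - f y = 0
        linarith
      · exact Or.inl hyK
    have : μ A ≤ μ Kᶜ := by
      calc μ A ≤ μ (Kᶜ ∪ {y | g y = 0}) := measure_mono hAsub'
        _ ≤ μ Kᶜ + μ {y | g y = 0} := measure_union_le _ _
        _ = μ Kᶜ := by rw [hμ g hg0, add_zero]
    rw [hequi A hA] at this
    exact absurd (this.trans_lt hKμ) (lt_irrefl _)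
end

section
/- Let F be an affine hyperplane of ℝⁿ, (vᵖ) a sequence of vectors not in the direction of F converging to a vector v not in the direction of F, and (νᵖ) a sequence of finite Borel measures on ℝⁿ, all supported in a fixed compact set, converging weakly to ν. Then the pushforwards (π_{F,vᵖ})_#νᵖ restricted to F + ℝ₊vᵖ converge weakly to (π_{F,v})_#ν, where π_{F,u} : F + ℝ₊u → F maps x + tu to x for x ∈ F, t ≥ 0. -/
/-!
After normalising the directions to `wᵖ = vᵖ / f⃗ vᵖ → w = v / f⃗ v`, and since `f⃗ vᵖ` eventually
has the sign of `f⃗ v`, the `p`-th integral is `∫_H φ (y - f y • wᵖ) dνᵖ` over the fixed half-space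
`H = {0 ≤ f / f⃗ v}`. The integrands converge uniformly on the common compact support `K`, and the
total masses are bounded, so they may be replaced by `φ (y - f y • w)`. It remains to see that
restricting to `H` preserves weak convergence: the indicator of `H` is squeezed between continuous
ramps whose difference concentrates on the hyperplane `∂H = {f = 0}`, which `ν` does not charge.
-/

open MeasureTheory Filter Topology Set BoundedContinuousFunction

theorem tendsto_of_abs_sub_le {ι κ : Type*} {l : Filter ι} {l' : Filter κ} [l'.NeBot]
    {x : ι → ℝ} {x₀ : ℝ} {y e : κ → ι → ℝ} {y₀ e₀ : κ → ℝ}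
    (hy : ∀ k, Tendsto (y k) l (𝓝 (y₀ k))) (he : ∀ k, Tendsto (e k) l (𝓝 (e₀ k)))
    (he₀ : Tendsto e₀ l' (𝓝 0)) (hx : ∀ᶠ k in l', ∀ i, |x i - y k i| ≤ e k i)
    (hx₀ : ∀ᶠ k in l', |x₀ - y₀ k| ≤ e₀ k) :
    Tendsto x l (𝓝 x₀) := by
  rw [Metric.tendsto_nhds]
  intro δ hδ
  obtain ⟨k, hek, hxk, hx₀k⟩ :=
    ((he₀.eventually (gt_mem_nhds (by positivity : (0 : ℝ) < δ / 4))).and (hx.and hx₀)).exists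
  filter_upwards [Metric.tendsto_nhds.1 (hy k) (δ / 4) (by positivity),
    (he k).eventually (gt_mem_nhds (by linarith : e₀ k < δ / 2))] with i hyi hei
  rw [Real.dist_eq] at hyi ⊢
  calc |x i - x₀| ≤ |x i - y k i| + |y k i - y₀ k| + |x₀ - y₀ k| := by
        rw [abs_sub_comm x₀ (y₀ k)]
        linarith [abs_sub_le (x i) (y k i) x₀, abs_sub_le (y k i) (y₀ k) x₀]
    _ < δ := by linarith [hxk i]

noncomputable def unitClamp : ℝ →ᵇ ℝ :=
  ofNormedAddCommGroup (fun t => max 0 (min 1 t)) (by fun_prop) 1 fun t => by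
    rw [Real.norm_eq_abs, abs_le]
    exact ⟨by linarith [le_max_left 0 (min 1 t)], max_le zero_le_one (min_le_left _ _)⟩

lemma unitClamp_apply (t : ℝ) : unitClamp t = max 0 (min 1 t) := rfl

lemma unitClamp_nonneg (t : ℝ) : 0 ≤ unitClamp t := le_max_left _ _

lemma unitClamp_le_one (t : ℝ) : unitClamp t ≤ 1 := max_le zero_le_one (min_le_left _ _)

lemma unitClamp_mono : Monotone unitClamp := fun _ _ h =>
  max_le_max le_rfl (min_le_min le_rfl h)

lemma unitClamp_of_nonpos {t : ℝ} (ht : t ≤ 0) : unitClamp t = 0 := by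
  rw [unitClamp_apply, min_eq_right (ht.trans zero_le_one), max_eq_left ht]

lemma unitClamp_of_one_le {t : ℝ} (ht : 1 ≤ t) : unitClamp t = 1 := by
  rw [unitClamp_apply, min_eq_left ht, max_eq_right zero_le_one]

lemma tendsto_unitClamp_div_add_one_sub (t : ℝ) :
    Tendsto (fun ε => unitClamp (t / ε + 1) - unitClamp (t / ε)) (𝓝[>] 0)
      (𝓝 (if t = 0 then 1 else 0)) := by
  rcases lt_trichotomy t 0 with ht | rfl | ht
  · refine tendsto_const_nhds.congr' ?_
    filter_upwards [Ioo_mem_nhdsGT (neg_pos.2 ht)] with ε ⟨hε, hεt⟩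
    have : t / ε ≤ -1 := by rw [div_le_iff₀ hε]; linarith
    rw [if_neg ht.ne, unitClamp_of_nonpos (by linarith), unitClamp_of_nonpos (by linarith),
      sub_zero]
  · simp [unitClamp_of_one_le, unitClamp_of_nonpos]
  · refine tendsto_const_nhds.congr' ?_
    filter_upwards [Ioo_mem_nhdsGT ht] with ε ⟨hε, hεt⟩
    have : 1 ≤ t / ε := by rw [le_div_iff₀ hε]; linarith
    rw [if_neg ht.ne', unitClamp_of_one_le (by linarith), unitClamp_of_one_le this, sub_self]

section WeakConvergence

variable {X ι : Type*} [TopologicalSpace X]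

-- As `ε → 0+`, `rampCutoff g 1 ε` decreases to the indicator of `{0 ≤ g}` and `rampCutoff g 0 ε`
-- increases to that of `{0 < g}`.
noncomputable def rampCutoff (g : C(X, ℝ)) (c ε : ℝ) : X →ᵇ ℝ :=
  unitClamp.compContinuous ⟨fun x => g x / ε + c, by fun_prop⟩

lemma rampCutoff_apply (g : C(X, ℝ)) (c ε : ℝ) (x : X) :
    rampCutoff g c ε x = unitClamp (g x / ε + c) := rfl

lemma abs_indicator_sub_mul_rampCutoff_le (g : C(X, ℝ)) {ε : ℝ} (hε : 0 < ε) (ψ : X →ᵇ ℝ)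
    (x : X) :
    |{x | 0 ≤ g x}.indicator ψ x - ψ x * rampCutoff g 1 ε x| ≤
      ‖ψ‖ * (rampCutoff g 1 ε x - rampCutoff g 0 ε x) := by
  simp only [rampCutoff_apply, add_zero]
  have hψ : |ψ x| ≤ ‖ψ‖ := by simpa only [Real.norm_eq_abs] using ψ.norm_coe_le_norm x
  by_cases hx : 0 ≤ g x
  · have h1 : 1 ≤ g x / ε + 1 := by linarith [div_nonneg hx hε.le]
    rw [indicator_of_mem (by exact hx), unitClamp_of_one_le h1, mul_one, sub_self, abs_zero]
    exact mul_nonneg ((abs_nonneg _).trans hψ) (by linarith [unitClamp_le_one (g x / ε)])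
  · have h0 : g x / ε ≤ 0 := div_nonpos_of_nonpos_of_nonneg (by linarith) hε.le
    rw [indicator_of_notMem (by exact hx), unitClamp_of_nonpos h0, sub_zero, zero_sub, abs_neg,
      abs_mul, abs_of_nonneg (unitClamp_nonneg _)]
    exact mul_le_mul_of_nonneg_right hψ (unitClamp_nonneg _)

variable [MeasurableSpace X] [OpensMeasurableSpace X]

lemma abs_setIntegral_sub_integral_mul_rampCutoff_le (g : C(X, ℝ)) {ε : ℝ} (hε : 0 < ε)
    (ψ : X →ᵇ ℝ) (m : Measure X) [IsFiniteMeasure m] :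
    |∫ x in {x | 0 ≤ g x}, ψ x ∂m - ∫ x, (ψ * rampCutoff g 1 ε) x ∂m| ≤
      ‖ψ‖ * ∫ x, (rampCutoff g 1 ε - rampCutoff g 0 ε) x ∂m := by
  have hH : MeasurableSet {x | 0 ≤ g x} := (isClosed_le continuous_const g.continuous).measurableSet
  rw [← integral_indicator hH, ← integral_sub ((ψ.integrable m).indicator hH)
    ((ψ * rampCutoff g 1 ε).integrable m), ← integral_const_mul]
  refine abs_integral_le_integral_abs.trans (integral_mono_of_nonneg
    (Eventually.of_forall fun _ => abs_nonneg _) ((integrable m _).const_mul _)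
    (Eventually.of_forall fun x => ?_))
  exact abs_indicator_sub_mul_rampCutoff_le g hε ψ x

lemma tendsto_integral_rampCutoff_sub (g : C(X, ℝ)) (μ : Measure X) [IsFiniteMeasure μ] :
    Tendsto (fun ε => ∫ x, (rampCutoff g 1 ε - rampCutoff g 0 ε) x ∂μ) (𝓝[>] 0)
      (𝓝 (μ.real {x | g x = 0})) := by
  have hZ : MeasurableSet {x | g x = 0} := (isClosed_eq g.continuous continuous_const).measurableSet
  rw [← integral_indicator_one hZ]
  refine tendsto_integral_filter_of_dominated_convergence (fun _ => 1)
    (Eventually.of_forall fun ε => (rampCutoff g 1 ε - rampCutoff g 0 ε).continuous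
      |>.aestronglyMeasurable) ?_ (integrable_const 1) (Eventually.of_forall fun x => ?_)
  · filter_upwards [self_mem_nhdsWithin] with ε (hε : 0 < ε)
    refine Eventually.of_forall fun x => ?_
    simp only [coe_sub, Pi.sub_apply, rampCutoff_apply, add_zero, Real.norm_eq_abs]
    have hmono := unitClamp_mono (le_add_of_nonneg_right zero_le_one : g x / ε ≤ g x / ε + 1)
    rw [abs_of_nonneg (sub_nonneg.2 hmono)]
    linarith [unitClamp_le_one (g x / ε + 1), unitClamp_nonneg (g x / ε)]
  · simpa only [coe_sub, Pi.sub_apply, rampCutoff_apply, add_zero, Set.indicator_apply,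
      mem_ofPred_eq, Pi.one_apply] using tendsto_unitClamp_div_add_one_sub (g x)

theorem tendsto_setIntegral_setOf_nonneg {l : Filter ι} {μs : ι → Measure X}
    [∀ i, IsFiniteMeasure (μs i)] {μ : Measure X} [IsFiniteMeasure μ]
    (hconv : ∀ φ : X →ᵇ ℝ, Tendsto (fun i => ∫ x, φ x ∂μs i) l (𝓝 (∫ x, φ x ∂μ)))
    (g : C(X, ℝ)) (hg : μ {x | g x = 0} = 0) (ψ : X →ᵇ ℝ) :
    Tendsto (fun i => ∫ x in {x | 0 ≤ g x}, ψ x ∂μs i) l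
      (𝓝 (∫ x in {x | 0 ≤ g x}, ψ x ∂μ)) := by
  have hlim := (tendsto_integral_rampCutoff_sub g μ).const_mul ‖ψ‖
  rw [measureReal_def, hg, ENNReal.toReal_zero, mul_zero] at hlim
  refine tendsto_of_abs_sub_le (fun ε => hconv (ψ * rampCutoff g 1 ε))
    (fun ε => (hconv _).const_mul _) hlim ?_ ?_ <;>
    filter_upwards [self_mem_nhdsWithin] with ε (hε : 0 < ε)
  · exact fun i => abs_setIntegral_sub_integral_mul_rampCutoff_le g hε ψ (μs i)
  · exact abs_setIntegral_sub_integral_mul_rampCutoff_le g hε ψ μ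

end WeakConvergence

theorem tendstoUniformlyOn_of_continuous_uncurry {ι α X Y : Type*} [TopologicalSpace α]
    [TopologicalSpace X] [UniformSpace Y] {Φ : α → X → Y} (hΦ : Continuous ↿Φ)
    {l : Filter ι} {a : ι → α} {a₀ : α} (ha : Tendsto a l (𝓝 a₀)) {K : Set X}
    (hK : IsCompact K) :
    TendstoUniformlyOn (fun i => Φ (a i)) (Φ a₀) l K :=
  ContinuousMap.tendsto_iff_forall_isCompact_tendstoUniformlyOn.1
    (((ContinuousMap.curry ⟨↿Φ, hΦ⟩).continuous.tendsto a₀).comp ha) K hK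

theorem tendsto_integral_sub_of_tendstoUniformlyOn {X ι : Type*} [MeasurableSpace X]
    {l : Filter ι} {μs : ι → Measure X} [∀ i, IsFiniteMeasure (μs i)] {K : Set X}
    (hK : ∀ i, ∀ᵐ x ∂μs i, x ∈ K) {C : ℝ} (hC : ∀ᶠ i in l, (μs i).real univ ≤ C)
    {F : ι → X → ℝ} {G : X → ℝ} (hF : TendstoUniformlyOn F G l K) :
    Tendsto (fun i => ∫ x, (F i x - G x) ∂μs i) l (𝓝 0) := by
  rw [Metric.tendsto_nhds]
  intro δ hδ
  have hC' : 0 < max C 0 + 1 := by positivity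
  filter_upwards [hC, Metric.tendstoUniformlyOn_iff.1 hF (δ / (max C 0 + 1)) (by positivity)]
    with i hCi hFi
  have hbound : ∀ᵐ x ∂μs i, ‖F i x - G x‖ ≤ δ / (max C 0 + 1) := by
    filter_upwards [hK i] with x hx
    rw [← dist_eq_norm, dist_comm]
    exact (hFi x hx).le
  rw [dist_zero_right]
  calc ‖∫ x, (F i x - G x) ∂μs i‖ ≤ δ / (max C 0 + 1) * (μs i).real univ :=
        norm_integral_le_of_norm_le_const hbound
    _ ≤ δ / (max C 0 + 1) * max C 0 := by gcongr; exact hCi.trans (le_max_left _ _)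
    _ < δ := by
        rw [div_mul_eq_mul_div, div_lt_iff₀ hC']
        nlinarith

theorem tendsto_setIntegral_setOf_nonneg_of_tendstoUniformlyOn {X ι : Type*} [TopologicalSpace X]
    [MeasurableSpace X] [OpensMeasurableSpace X] {l : Filter ι} {μs : ι → Measure X}
    [∀ i, IsFiniteMeasure (μs i)] {μ : Measure X} [IsFiniteMeasure μ]
    (hconv : ∀ φ : X →ᵇ ℝ, Tendsto (fun i => ∫ x, φ x ∂μs i) l (𝓝 (∫ x, φ x ∂μ)))
    (g : C(X, ℝ)) (hg : μ {x | g x = 0} = 0) {K : Set X} (hK : ∀ i, ∀ᵐ x ∂μs i, x ∈ K)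
    {F : ι → X →ᵇ ℝ} {G : X →ᵇ ℝ} (hF : TendstoUniformlyOn (fun i => ⇑(F i)) G l K) :
    Tendsto (fun i => ∫ x in {x | 0 ≤ g x}, F i x ∂μs i) l
      (𝓝 (∫ x in {x | 0 ≤ g x}, G x ∂μ)) := by
  have hmass : Tendsto (fun i => (μs i).real univ) l (𝓝 (μ.real univ)) := by
    simpa using hconv 1
  have hC : ∀ᶠ i in l, ((μs i).restrict {x | 0 ≤ g x}).real univ ≤ μ.real univ + 1 := by
    filter_upwards [hmass.eventually (eventually_le_nhds (lt_add_one _))] with i hi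
    rw [measureReal_restrict_apply_univ]
    exact (measureReal_mono (subset_univ _)).trans hi
  have hdiff := tendsto_integral_sub_of_tendstoUniformlyOn (fun i => ae_restrict_of_ae (hK i)) hC hF
  refine zero_add (∫ x in {x | 0 ≤ g x}, G x ∂μ) ▸
    (hdiff.add (tendsto_setIntegral_setOf_nonneg hconv g hg G)).congr fun i => ?_
  rw [integral_sub ((F i).integrable _) (G.integrable _), sub_add_cancel]

theorem integral_map_restrict_setOf_nonneg_div {E : Type*} [NormedAddCommGroup E]
    [NormedSpace ℝ E] [FiniteDimensional ℝ E] [MeasurableSpace E] [BorelSpace E]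
    (f : E →ᵃ[ℝ] ℝ) {a : ℝ} {u : E} (hu : 0 < f.linear u * a) (μ : Measure E) (φ : E →ᵇ ℝ) :
    ∫ x, φ x ∂(Measure.map (fun y => y - (f y / f.linear u) • u)
        (μ.restrict {y | 0 ≤ f y / f.linear u})) =
      ∫ y in {y | 0 ≤ f y / a}, φ (y - f y • (f.linear u)⁻¹ • u) ∂μ := by
  have hf : Continuous f := f.continuous_of_finiteDimensional
  have hpos : 0 < f.linear u / a := div_pos_iff.2 (mul_pos_iff.1 hu)
  have hset : {y | 0 ≤ f y / f.linear u} = {y | 0 ≤ f y / a} := by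
    ext y
    rw [mem_ofPred_eq, mem_ofPred_eq, ← mul_nonneg_iff_of_pos_right hpos,
      div_mul_div_cancel₀ (left_ne_zero_of_mul hu.ne')]
  rw [hset, integral_map (by fun_prop) φ.continuous.aestronglyMeasurable]
  simp only [smul_smul, div_eq_mul_inv]

theorem projected_measures_weak_convergence_general (n : ℕ)
    (f : (Fin n → ℝ) →ᵃ[ℝ] ℝ)
    (v : Fin n → ℝ) (hv : f.linear v ≠ 0)
    (vp : ℕ → Fin n → ℝ)
    (hvlim : Tendsto vp atTop (nhds v))
    (ν : Measure (Fin n → ℝ)) [IsFiniteMeasure ν]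
    (νp : ℕ → Measure (Fin n → ℝ)) (hfin : ∀ p, IsFiniteMeasure (νp p))
    (K : Set (Fin n → ℝ)) (hK : IsCompact K)
    (hsupp : ν Kᶜ = 0 ∧ ∀ p, νp p Kᶜ = 0)
    (hν : ∀ g : (Fin n → ℝ) →ᵃ[ℝ] ℝ, g.linear ≠ 0 → ν {x | g x = 0} = 0)
    (hconv : ∀ φ : BoundedContinuousFunction (Fin n → ℝ) ℝ,
      Tendsto (fun p => ∫ x, φ x ∂(νp p)) atTop (nhds (∫ x, φ x ∂ν))) :
    ∀ φ : BoundedContinuousFunction (Fin n → ℝ) ℝ,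
      Tendsto
        (fun p => ∫ x, φ x ∂(Measure.map
          (fun y => y - (f y / f.linear (vp p)) • vp p)
          ((νp p).restrict {y | 0 ≤ f y / f.linear (vp p)})))
        atTop
        (nhds (∫ x, φ x ∂(Measure.map
          (fun y => y - (f y / f.linear v) • v)
          (ν.restrict {y | 0 ≤ f y / f.linear v})))) := by
  intro φ
  have hf : Continuous f := f.continuous_of_finiteDimensional
  have hlin : Tendsto (fun p => f.linear (vp p)) atTop (𝓝 (f.linear v)) :=
    (f.linear.continuous_of_finiteDimensional.tendsto v).comp hvlim
  have hsign : ∀ᶠ p in atTop, 0 < f.linear (vp p) * f.linear v :=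
    (hlin.mul_const _).eventually (lt_mem_nhds (mul_self_pos.2 hv))
  let g : C(Fin n → ℝ, ℝ) := ⟨fun y => f y / f.linear v, by fun_prop⟩
  have hg : ν {y | g y = 0} = 0 := by
    simpa [g, div_eq_zero_iff, hv] using hν f fun h => hv (by simp [h])
  have hνpK : ∀ p, ∀ᵐ y ∂νp p, y ∈ K := fun p => by
    simpa using measure_eq_zero_iff_ae_notMem.1 (hsupp.2 p)
  let Φ (w : Fin n → ℝ) : BoundedContinuousFunction (Fin n → ℝ) ℝ :=
    φ.compContinuous ⟨fun y => y - f y • w, by fun_prop⟩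
  have hΦ : TendstoUniformlyOn (fun p => ⇑(Φ ((f.linear (vp p))⁻¹ • vp p)))
      (Φ ((f.linear v)⁻¹ • v)) atTop K :=
    tendstoUniformlyOn_of_continuous_uncurry (Φ := fun w y => Φ w y)
      (show Continuous fun q : _ × _ => φ (q.2 - f q.2 • q.1) by fun_prop)
      ((hlin.inv₀ hv).smul hvlim) hK
  rw [integral_map_restrict_setOf_nonneg_div f (mul_self_pos.2 hv)]
  refine (tendsto_setIntegral_setOf_nonneg_of_tendstoUniformlyOn hconv g hg hνpK hΦ).congr' ?_
  filter_upwards [hsign] with p hp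
  rw [integral_map_restrict_setOf_nonneg_div f hp]
  rfl

/-- Continuity of the projected measures: let `F = {x : f x = 0}` be an
affine hyperplane of `ℝⁿ`, `vᵖ → v` vectors transversal to `F`, and `νᵖ → ν` weakly, all
supported in a fixed compact set, with `ν` vanishing on affine hyperplanes.  Then the
pushforwards under `π_{F,u}(y) = y - (f y / f⃗ u) • u` of the restrictions to the half-space
`F + ℝ₊u = {y : f y / f⃗ u ≥ 0}` converge weakly: `(π_{F,vᵖ})_#(νᵖ|_{F+ℝ₊vᵖ}) →
(π_{F,v})_#(ν|_{F+ℝ₊v})`. -/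
theorem projected_measures_weak_convergence (n : ℕ)
    (f : (Fin n → ℝ) →ᵃ[ℝ] ℝ) (hf : f.linear ≠ 0)
    (v : Fin n → ℝ) (hv : f.linear v ≠ 0)
    (vp : ℕ → Fin n → ℝ) (hvp : ∀ p, f.linear (vp p) ≠ 0)
    (hvlim : Tendsto vp atTop (nhds v))
    (ν : Measure (Fin n → ℝ)) [IsFiniteMeasure ν]
    (νp : ℕ → Measure (Fin n → ℝ)) (hfin : ∀ p, IsFiniteMeasure (νp p))
    (K : Set (Fin n → ℝ)) (hK : IsCompact K)
    (hsupp : ν Kᶜ = 0 ∧ ∀ p, νp p Kᶜ = 0)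
    (hν : ∀ g : (Fin n → ℝ) →ᵃ[ℝ] ℝ, g.linear ≠ 0 → ν {x | g x = 0} = 0)
    (hconv : ∀ φ : BoundedContinuousFunction (Fin n → ℝ) ℝ,
      Tendsto (fun p => ∫ x, φ x ∂(νp p)) atTop (nhds (∫ x, φ x ∂ν))) :
    ∀ φ : BoundedContinuousFunction (Fin n → ℝ) ℝ,
      Tendsto
        (fun p => ∫ x, φ x ∂(Measure.map
          (fun y => y - (f y / f.linear (vp p)) • vp p)
          ((νp p).restrict {y | 0 ≤ f y / f.linear (vp p)})))
        atTop
        (nhds (∫ x, φ x ∂(Measure.map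
          (fun y => y - (f y / f.linear v) • v)
          (ν.restrict {y | 0 ≤ f y / f.linear v})))) :=
  projected_measures_weak_convergence_general n f v hv vp hvlim ν νp hfin K hK hsupp hν hconv
end

section
/- Let F ⊆ M(ℝⁿ) be a tight family of finite Borel measures on ℝⁿ, each vanishing on affine hyperplanes, with {μ(ℝⁿ) : μ ∈ F} bounded and bounded away from 0. Then there is a compact set K ⊆ ℝⁿ containing every Yao-Yao center of every member of F. -/
open MeasureTheory

/-- A Yao-Yao center of `μ` : the center of some Yao-Yao equipartition of `ℝⁿ` for `μ`. -/
def IsYaoYaoCenter {n : ℕ} (μ : Measure (Fin n → ℝ)) (x : Fin n → ℝ) : Prop :=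
  ∃ P : Set (Set (Fin n → ℝ)), IsYaoYao n Set.univ P x ∧
    ∀ A ∈ P, μ A = μ Set.univ / 2 ^ n

/-- For any linear functional `f`, a Yao-Yao partition with center `x` has a cell
contained in the halfspace `{y | f x ≤ f y}`. -/
lemma IsYaoYao.exists_cell_halfspace {V : Type*} [AddCommGroup V] [Module ℝ V]
    {n : ℕ} {E : Set V} {P : Set (Set V)} {x : V} (h : IsYaoYao n E P x)
    (f : V →ₗ[ℝ] ℝ) : ∃ A ∈ P, ∀ y ∈ A, f x ≤ f y := by
  induction h with
  | zero x =>
      refine ⟨{x}, rfl, ?_⟩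
      rintro y rfl
      exact le_refl _
  | succ v hv h1 hm ih1 ihm =>
      rcases le_or_gt 0 (f v) with hfv | hfv
      · obtain ⟨A, hA, hAf⟩ := ih1
        refine ⟨_, Or.inr ⟨A, hA, rfl⟩, ?_⟩
        rintro y ⟨a, ha, t, ht, rfl⟩
        have h1 := hAf a ha
        have h2 : (0 : ℝ) ≤ t * f v := mul_nonneg ht hfv
        simp only [map_add, _root_.map_smul, smul_eq_mul]
        linarith
      · obtain ⟨A, hA, hAf⟩ := ihm
        refine ⟨_, Or.inl ⟨A, hA, rfl⟩, ?_⟩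
        rintro y ⟨a, ha, t, ht, rfl⟩
        have h1 := hAf a ha
        have h2 : (0 : ℝ) ≤ t * f v := by nlinarith
        simp only [map_add, _root_.map_smul, smul_eq_mul]
        linarith

/-- (Lemma 5) For a tight family of finite Borel measures on `ℝⁿ`
vanishing on affine hyperplanes, with total masses bounded above and bounded away from
`0`, there is a compact set containing every Yao-Yao center of every member. -/
theorem yaoyao_centers_in_compact (n : ℕ) (𝓕 : Set (Measure (Fin n → ℝ)))
    (hnull : ∀ μ ∈ 𝓕, ∀ f : (Fin n → ℝ) →ᵃ[ℝ] ℝ, f.linear ≠ 0 → μ {x | f x = 0} = 0)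
    (htight : ∀ ε : ENNReal, 0 < ε → ∃ K₀ : Set (Fin n → ℝ), IsCompact K₀ ∧
      ∀ μ ∈ 𝓕, μ K₀ᶜ < ε)
    (hbdd : ∃ C : ENNReal, C ≠ ⊤ ∧ ∀ μ ∈ 𝓕, μ Set.univ ≤ C)
    (hbelow : ∃ c : ENNReal, 0 < c ∧ ∀ μ ∈ 𝓕, c ≤ μ Set.univ) :
    ∃ K : Set (Fin n → ℝ), IsCompact K ∧
      ∀ μ ∈ 𝓕, ∀ x : Fin n → ℝ, IsYaoYaoCenter μ x → x ∈ K := by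
  obtain ⟨c, hc, hcbd⟩ := hbelow
  have hε : (0 : ENNReal) < c / 2 ^ n :=
    ENNReal.div_pos hc.ne' (by simp)
  obtain ⟨K₀, hK₀c, hK₀⟩ := htight (c / 2 ^ n) hε
  refine ⟨closure (convexHull ℝ K₀),
    (isBounded_convexHull.mpr hK₀c.isBounded).isCompact_closure, ?_⟩
  intro μ hμ x ⟨P, hP, hPμ⟩
  by_contra hx
  obtain ⟨f, u, hfu, hux⟩ :=
    geometric_hahn_banach_closed_point (convex_convexHull ℝ K₀).closure
      isClosed_closure hx
  obtain ⟨A, hA, hAf⟩ := hP.exists_cell_halfspace f.toLinearMap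
  have hμA : μ A = μ Set.univ / 2 ^ n := hPμ A hA
  have hεA : c / 2 ^ n ≤ μ A := by
    rw [hμA]
    exact ENNReal.div_le_div_right (hcbd μ hμ) _
  have hnot : ¬ A ⊆ K₀ᶜ := by
    intro hsub
    exact absurd (le_trans hεA (measure_mono hsub)) (not_le.mpr (hK₀ μ hμ))
  obtain ⟨y, hyA, hyK⟩ := Set.not_subset.mp hnot
  have hyK₀ : y ∈ K₀ := Set.not_notMem.mp hyK
  have h1 : f y < u := hfu y (subset_closure (subset_convexHull ℝ K₀ hyK₀))
  have h2 : f x ≤ f y := hAf y hyA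
  linarith
end
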